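/- Let (φ_W, T) satisfy either: 0 < T < π/2 and π/2 < φ_W < π − T (i.e., (φ_W, T) ∈ D₁ with φ_W ≠ π/2), or: 0 < T ≤ π/2, π − T < φ_W < π and T ≤ −tan φ_W (i.e., (φ_W, T) ∈ D₂' ∪ D₂''). Then F²_{φ_W,T} has no positive roots: F²_{φ_W,T}(a) ≠ 0 for all a > 0. -/

import Mathlib

open Real

/-- The determinant function
`F²_{φ_W,T}(a) = -a² sinh(2aT) sin(2φ_W) + 2a (1 - cosh(2aT) cos(2φ_W)) + sinh(2aT) sin(2φ_W)`. -/
noncomputable def F2 (φW T a : ℝ) : ℝ :=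
  -a ^ 2 * Real.sinh (2 * a * T) * Real.sin (2 * φW)
    + 2 * a * (1 - Real.cosh (2 * a * T) * Real.cos (2 * φW))
    + Real.sinh (2 * a * T) * Real.sin (2 * φW)

/-- The hyperbolic cotangent `coth x = cosh x / sinh x` (not available in Mathlib). -/
noncomputable def Real.coth (x : ℝ) : ℝ := Real.cosh x / Real.sinh x

/-!
Writing `x = aT`, the double-angle formulas factor `F²` as
`4 (a cosh x sin φ + sinh x cos φ) (cosh x sin φ - a sinh x cos φ)`.
On both domains `cos φ < 0` and `T ≤ -tan φ`, i.e. `sin φ + T cos φ ≥ 0`; hence `sin φ > 0` and the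
second factor is positive. Since `sinh x < x cosh x` and `cos φ < 0`, the first factor exceeds
`a cosh x (sin φ + T cos φ) ≥ 0`. So `F²` is positive for every `a > 0`.
-/

theorem Real.sinh_lt_mul_cosh {x : ℝ} (hx : 0 < x) : sinh x < x * cosh x := by
  have hderiv (y : ℝ) : HasDerivAt (fun t => t * cosh t - sinh t) (y * sinh y) y :=
    (((hasDerivAt_id' y).mul (hasDerivAt_cosh y)).sub (hasDerivAt_sinh y)).congr_deriv
      (by ring)
  have hmono : StrictMonoOn (fun t => t * cosh t - sinh t) (Set.Ici 0) := by
    refine strictMonoOn_of_deriv_pos (convex_Ici 0) (by fun_prop) fun y hy => ?_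
    rw [interior_Ici] at hy
    rw [(hderiv y).deriv]
    exact mul_pos hy (sinh_pos_iff.2 hy)
  simpa using hmono Set.self_mem_Ici (Set.mem_Ici.2 hx.le) hx

theorem F2_eq_mul (φ T a : ℝ) :
    F2 φ T a = 4 * (a * cosh (a * T) * sin φ + sinh (a * T) * cos φ) *
      (cosh (a * T) * sin φ - a * sinh (a * T) * cos φ) := by
  have hpyth := sin_sq_add_cos_sq φ
  have hhyp := cosh_sq_sub_sinh_sq (a * T)
  rw [F2, mul_assoc 2 a T, sinh_two_mul, cosh_two_mul, sin_two_mul, cos_two_mul]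
  linear_combination (-(4 * a * cosh (a * T) ^ 2)) * hpyth - 2 * a * hhyp

theorem F2_pos {φ T a : ℝ} (hT : 0 < T) (ha : 0 < a) (hcos : cos φ < 0)
    (h : 0 ≤ sin φ + T * cos φ) : 0 < F2 φ T a := by
  have hsin : 0 < sin φ := by nlinarith
  have hs : 0 < sinh (a * T) := sinh_pos_iff.2 (mul_pos ha hT)
  have hc : 0 < cosh (a * T) := cosh_pos (a * T)
  have hfirst : 0 < a * cosh (a * T) * sin φ + sinh (a * T) * cos φ :=
    calc 0 ≤ a * cosh (a * T) * (sin φ + T * cos φ) := by positivity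
      _ = a * cosh (a * T) * sin φ + (a * T * cosh (a * T)) * cos φ := by ring
      _ < a * cosh (a * T) * sin φ + sinh (a * T) * cos φ := by
        gcongr ?_ + ?_
        exact mul_lt_mul_of_neg_right (sinh_lt_mul_cosh (mul_pos ha hT)) hcos
  have hsecond : 0 < cosh (a * T) * sin φ - a * sinh (a * T) * cos φ := by
    nlinarith [mul_pos hc hsin, mul_pos ha hs]
  rw [F2_eq_mul]
  positivity

theorem sin_add_mul_cos_nonneg_of_le_neg_tan {φ T : ℝ} (hcos : cos φ < 0)
    (h : T ≤ -tan φ) : 0 ≤ sin φ + T * cos φ := by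
  rw [tan_eq_sin_div_cos, le_neg, div_le_iff_of_neg hcos] at h
  linarith

theorem lt_neg_tan_of_le_pi_sub {φ T : ℝ} (hφ : π / 2 < φ) (hφπ : φ < π) (h : T ≤ π - φ) :
    T < -tan φ := by
  rw [← tan_pi_sub]
  exact h.trans_lt (lt_tan (by linarith) (by linarith))

theorem F2_no_positive_roots (φW T : ℝ)
    (h : (0 < T ∧ T < Real.pi / 2 ∧ Real.pi / 2 < φW ∧ φW < Real.pi - T) ∨
         (0 < T ∧ T ≤ Real.pi / 2 ∧ Real.pi - T < φW ∧ φW < Real.pi ∧ T ≤ -Real.tan φW)) :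
    ∀ a : ℝ, 0 < a → F2 φW T a ≠ 0 := by
  obtain ⟨hT, hφ, hφπ, htan⟩ : 0 < T ∧ π / 2 < φW ∧ φW < π ∧ T ≤ -tan φW := by
    rcases h with ⟨hT, -, hφ, hφT⟩ | ⟨hT, hTπ, hφT, hφπ, htan⟩
    · exact ⟨hT, hφ, by linarith,
        (lt_neg_tan_of_le_pi_sub hφ (by linarith) (by linarith)).le⟩
    · exact ⟨hT, by linarith, hφπ, htan⟩
  have hcos : cos φW < 0 := cos_neg_of_pi_div_two_lt_of_lt hφ (by linarith)
  intro a ha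
  exact (F2_pos hT ha hcos (sin_add_mul_cos_nonneg_of_le_neg_tan hcos htan)).ne'
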